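/- arXiv:1210.7997 — 2 statements merged into one kernel-verified Lean document; each statement's English description precedes it below -/
import Mathlib

section
/- For every even integer l ≥ 4, the sum of ζ(l₁, l₂) over all integers l₁ ≥ 2, l₂ ≥ 1 with l₁ + l₂ = l and both l₁ and l₂ odd equals (1/4)·ζ(l). -/
open scoped BigOperators
open Finset

/-- The double zeta value ζ(l₁, l₂) = ∑_{m₁ > m₂ > 0} 1/(m₁^l₁ m₂^l₂). -/
noncomputable def dzeta (l₁ l₂ : ℕ) : ℝ :=
  ∑' p : {q : ℕ+ × ℕ+ // q.2 < q.1}, 1 / ((p.1.1 : ℝ) ^ l₁ * (p.1.2 : ℝ) ^ l₂)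

/-- The Riemann zeta value ζ(l) = ∑_{m ≥ 1} 1/m^l. -/
noncomputable def zetav (l : ℕ) : ℝ := ∑' m : ℕ+, 1 / (m : ℝ) ^ l

/-- T_l(x,y) = ∑_{l₁ ≥ 2, l₂ ≥ 1, l₁+l₂=l} x^(l₁-1) y^(l₂-1) ζ(l₁,l₂). -/
noncomputable def Tl (l : ℕ) (x y : ℂ) : ℂ :=
  ∑ l₁ ∈ Finset.Icc 2 (l - 1), x ^ (l₁ - 1) * y ^ (l - l₁ - 1) * (dzeta l₁ (l - l₁) : ℂ)

noncomputable def omega : ℂ := Complex.exp (2 * Real.pi * Complex.I / 3)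

/-!
Euler's sum formula `∑_{a=2}^{l-1} ζ(a, l-a) = ζ(l)` comes from the partial fraction identity
`∑_a 1/(m^(l-a) (m+n)^a) = 1/(m^(l-2) n (m+n)) - 1/(n (m+n)^(l-1))`: summed over `m, n ≥ 1`, the
second term gives `ζ(l-1, 1)` and the first, since `∑_n 1/(n (m+n)) = H_m / m`, gives
`∑_m H_m / m^(l-1) = ζ(l-1, 1) + ζ(l)`.

For the even part, sum the stuffle relation `ζ(a) ζ(b) = ζ(a, b) + ζ(b, a) + ζ(a + b)` over even
`a + b = l = 2N`. Euler's evaluation of `ζ(2j)` by Bernoulli numbers turns `∑_j ζ(2j) ζ(l - 2j)`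
into the convolution `∑_j C(2N, 2j) B_{2j} B_{2N-2j} = -(2N+1) B_{2N}`, which is read off from
`B² = (1 - X) B - X B'` for `B = X / (e^X - 1)`. This gives `(l+1)/2 · ζ(l)` for the products,
hence `3/4 · ζ(l)` for the even part of the double zeta sum and `1/4 · ζ(l)` for the odd part.
-/

open Filter Topology Real
open scoped Nat

def ltPairEquiv : ℕ × ℕ ≃ {q : ℕ+ × ℕ+ // q.2 < q.1} where
  toFun p := ⟨(⟨p.1 + p.2 + 2, by omega⟩, ⟨p.1 + 1, by omega⟩),
    PNat.coe_lt_coe _ _ |>.1 (by simp only [PNat.mk_coe]; omega)⟩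
  invFun q := ((q.1.2 : ℕ) - 1, (q.1.1 : ℕ) - q.1.2 - 1)
  left_inv p := by ext <;> simp only [PNat.mk_coe] <;> omega
  right_inv := by
    rintro ⟨⟨m, n⟩, h⟩
    have h' : (n : ℕ) < m := h
    have := n.pos
    ext <;> apply PNat.eq <;> simp only [PNat.mk_coe] <;> omega

/-- The summand of the Tornheim double series `T(r, s, t) = ∑_{m, n ≥ 1} m^(-r) n^(-s) (m+n)^(-t)`,
indexed by `(m - 1, n - 1)`. -/
noncomputable def tornheimTerm (r s t : ℕ) (p : ℕ × ℕ) : ℝ :=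
  1 / (((p.1 : ℝ) + 1) ^ r * ((p.2 : ℝ) + 1) ^ s * ((p.1 : ℝ) + 1 + (p.2 + 1)) ^ t)

lemma tornheimTerm_swap (r s t : ℕ) (p : ℕ × ℕ) :
    tornheimTerm r s t p.swap = tornheimTerm s r t p := by
  simp only [tornheimTerm, Prod.fst_swap, Prod.snd_swap]
  ring_nf

lemma dzeta_eq_tsum_tornheimTerm (a b : ℕ) : dzeta a b = ∑' p, tornheimTerm b 0 a p := by
  rw [dzeta, ← ltPairEquiv.tsum_eq]
  refine tsum_congr fun p => ?_
  simp only [ltPairEquiv, tornheimTerm, Equiv.coe_fn_mk, PNat.mk_coe]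
  push_cast
  ring_nf

lemma zetav_eq_tsum (l : ℕ) : zetav l = ∑' n : ℕ, 1 / ((n : ℝ) + 1) ^ l := by
  rw [zetav, tsum_pnat_eq_tsum_succ (f := fun n : ℕ => 1 / (n : ℝ) ^ l)]
  push_cast
  rfl

lemma summable_one_div_add_one_pow {c : ℕ} (hc : 2 ≤ c) :
    Summable fun n : ℕ => 1 / ((n : ℝ) + 1) ^ c := by
  simpa using (summable_nat_add_iff 1).2 (Real.summable_one_div_nat_pow.2 hc)

lemma summable_tornheimTerm {r s t i : ℕ} (hi : i ≤ t) (hr : 2 ≤ r + i) (hs : 2 ≤ s + (t - i)) :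
    Summable (tornheimTerm r s t) := by
  have hprod := (summable_one_div_add_one_pow hr).mul_of_nonneg (summable_one_div_add_one_pow hs)
    (fun _ => by positivity) fun _ => by positivity
  refine hprod.of_nonneg_of_le (fun p => by unfold tornheimTerm; positivity) fun p => ?_
  rw [one_div_mul_one_div]
  set x : ℝ := p.1 + 1
  set y : ℝ := p.2 + 1
  have hx : 0 < x := by positivity
  have hy : 0 < y := by positivity
  apply one_div_le_one_div_of_le (by positivity)
  calc x ^ (r + i) * y ^ (s + (t - i)) = x ^ r * y ^ s * (x ^ i * y ^ (t - i)) := by ring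
    _ ≤ x ^ r * y ^ s * ((x + y) ^ i * (x + y) ^ (t - i)) := by gcongr <;> linarith
    _ = x ^ r * y ^ s * (x + y) ^ t := by rw [← pow_add, Nat.add_sub_cancel' hi]

lemma sum_Icc_one_div_pow_mul_add_pow {K : Type*} [Field K] {x y : K} (hx : x ≠ 0) (hy : y ≠ 0)
    (hxy : x + y ≠ 0) {l : ℕ} (hl : 2 ≤ l) :
    ∑ a ∈ Icc 2 (l - 1), 1 / (x ^ (l - a) * (x + y) ^ a) =
      1 / (x ^ (l - 2) * y * (x + y)) - 1 / (y * (x + y) ^ (l - 1)) := by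
  obtain ⟨L, rfl⟩ : ∃ L, l = L + 2 := ⟨l - 2, by omega⟩
  have hne : (x + y)⁻¹ ≠ x⁻¹ := inv_injective.ne (by simpa using hy)
  have hsub : (x + y)⁻¹ - x⁻¹ = -y / (x * (x + y)) := by
    field_simp
    ring
  have hIcc : Icc 2 (L + 2 - 1) = Ico 2 (L + 2) := by
    ext
    simp only [mem_Icc, mem_Ico]
    omega
  have hterm : ∀ a ∈ Ico 2 (L + 2), 1 / (x ^ (L + 2 - a) * (x + y) ^ a) =
      x⁻¹ * ((x + y)⁻¹ ^ a * x⁻¹ ^ (L + 2 - 1 - a)) := by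
    intro a ha
    rw [mem_Ico] at ha
    rw [show L + 2 - a = L + 2 - 1 - a + 1 by omega, pow_succ, inv_pow, inv_pow]
    field_simp
  rw [hIcc, sum_congr rfl hterm, ← mul_sum, geom_sum₂_Ico hne (by omega), hsub]
  simp only [Nat.add_sub_cancel, inv_pow, show L + 2 - 1 = L + 1 by omega]
  field_simp
  ring

lemma sum_Icc_tornheimTerm {l : ℕ} (hl : 2 ≤ l) (p : ℕ × ℕ) :
    ∑ a ∈ Icc 2 (l - 1), tornheimTerm (l - a) 0 a p =
      tornheimTerm (l - 2) 1 1 p - tornheimTerm 0 1 (l - 1) p := by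
  simpa [tornheimTerm] using sum_Icc_one_div_pow_mul_add_pow (x := (p.1 : ℝ) + 1)
    (y := (p.2 : ℝ) + 1) (by positivity) (by positivity) (by positivity) hl

lemma hasSum_sub_succ {f : ℕ → ℝ} (hf : ∀ n, f (n + 1) ≤ f n) (h : Tendsto f atTop (𝓝 0)) :
    HasSum (fun n => f n - f (n + 1)) (f 0) := by
  rw [hasSum_iff_tendsto_nat_of_nonneg (fun n => sub_nonneg.2 (hf n))]
  simp_rw [sum_range_sub']
  simpa using (tendsto_const_nhds (x := f 0)).sub h

lemma hasSum_one_div_sub_one_div_add (n : ℕ) :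
    HasSum (fun k : ℕ => 1 / ((k : ℝ) + 1) - 1 / ((k : ℝ) + 1 + n)) (harmonic n) := by
  set f : ℕ → ℝ := fun k => ∑ j ∈ range n, 1 / ((k : ℝ) + j + 1)
  have hstep : ∀ k, f k - f (k + 1) = 1 / ((k : ℝ) + 1) - 1 / ((k : ℝ) + 1 + n) := by
    intro k
    have := sum_range_sub' (fun j : ℕ => 1 / ((k : ℝ) + j + 1)) n
    simp only [f, ← sum_sub_distrib]
    push_cast at this ⊢
    convert this using 3 <;> ring
  have hmono : ∀ k, f (k + 1) ≤ f k := fun k => sub_nonneg.1 <| (hstep k).symm ▸ sub_nonneg.2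
    (one_div_le_one_div_of_le (by positivity) (le_add_of_nonneg_right n.cast_nonneg))
  have hlim : Tendsto f atTop (𝓝 0) := by
    have := tendsto_finsetSum (range n) fun j _ =>
      (tendsto_one_div_add_atTop_nhds_zero_nat (𝕜 := ℝ)).comp (tendsto_add_atTop_nat j)
    simp only [sum_const_zero, Function.comp_def] at this
    convert this using 3 with k j
    push_cast
    ring
  have hf0 : f 0 = harmonic n := by
    simp only [f, harmonic]
    push_cast
    simp [add_comm]
  exact hf0 ▸ (hasSum_sub_succ hmono hlim).congr_fun fun k => (hstep k).symm

lemma tsum_tornheimTerm_one_one {c : ℕ} (hc : 2 ≤ c) :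
    ∑' p, tornheimTerm c 1 1 p = ∑' m : ℕ, (harmonic (m + 1) : ℝ) / ((m : ℝ) + 1) ^ (c + 1) := by
  have hfiber : ∀ m : ℕ, HasSum (fun n => tornheimTerm c 1 1 (m, n))
      ((harmonic (m + 1) : ℝ) / ((m : ℝ) + 1) ^ (c + 1)) := by
    intro m
    refine ((hasSum_one_div_sub_one_div_add (m + 1)).div_const _).congr_fun fun n => ?_
    simp only [tornheimTerm]
    push_cast
    field_simp
    ring
  rw [(summable_tornheimTerm (i := 0) (by omega) (by omega) (by omega)).tsum_prod'
    fun m => (hfiber m).summable]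
  exact tsum_congr fun m => (hfiber m).tsum_eq

lemma tsum_eq_tsum_sum_antidiagonal {α : Type*} [AddCommMonoid α] [TopologicalSpace α]
    [ContinuousAdd α] [T3Space α] {f : ℕ × ℕ → α} (hf : Summable f) :
    ∑' p, f p = ∑' s, ∑ p ∈ antidiagonal s, f p := by
  rw [← HasAntidiagonal.sigmaAntidiagonalEquivProd.tsum_eq]
  exact ((HasAntidiagonal.sigmaAntidiagonalEquivProd.summable_iff.2 hf).tsum_sigma'
    fun s => (hasSum_fintype _).summable).trans
      (tsum_congr fun s => (tsum_fintype _).trans (sum_finset_coe (fun p => f p) _))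

lemma summable_harmonic_div_pow {a : ℕ} (ha : 3 ≤ a) :
    Summable fun n : ℕ => (harmonic n : ℝ) / ((n : ℝ) + 1) ^ a := by
  refine (summable_one_div_add_one_pow (c := a - 1) (by omega)).of_nonneg_of_le
    (fun n => by push_cast [harmonic]; positivity) fun n => ?_
  have hH : (harmonic n : ℝ) ≤ n + 1 := by
    push_cast [harmonic]
    calc ∑ i ∈ range n, ((i : ℝ) + 1)⁻¹ ≤ ∑ i ∈ range n, (1 : ℝ) :=
          sum_le_sum fun i _ => inv_le_one_of_one_le₀ (by linarith [i.cast_nonneg (α := ℝ)])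
      _ ≤ n + 1 := by simp
  calc (harmonic n : ℝ) / ((n : ℝ) + 1) ^ a ≤ ((n : ℝ) + 1) / ((n : ℝ) + 1) ^ a := by gcongr
    _ = 1 / ((n : ℝ) + 1) ^ (a - 1) := by
      rw [← Nat.sub_add_cancel (show 1 ≤ a by omega), pow_succ]
      field_simp
      simp

lemma dzeta_add_zetav_eq_tsum_harmonic {a : ℕ} (ha : 3 ≤ a) :
    dzeta a 1 + zetav (a + 1) = ∑' n : ℕ, (harmonic (n + 1) : ℝ) / ((n : ℝ) + 1) ^ a := by
  have hdzeta : dzeta a 1 = ∑' n : ℕ, (harmonic (n + 1) : ℝ) / ((n : ℝ) + 2) ^ a := by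
    rw [dzeta_eq_tsum_tornheimTerm,
      tsum_eq_tsum_sum_antidiagonal
        (summable_tornheimTerm (i := a - 2) (by omega) (by omega) (by omega))]
    refine tsum_congr fun s => ?_
    rw [Nat.sum_antidiagonal_eq_sum_range_succ_mk, harmonic]
    push_cast
    rw [sum_div]
    refine sum_congr rfl fun j hj => ?_
    simp only [tornheimTerm]
    rw [Nat.cast_sub (by simpa [Nat.lt_succ_iff] using hj),
      show (j : ℝ) + 1 + (s - j + 1) = s + 2 by ring]
    field_simp
  have hsum := summable_harmonic_div_pow ha
  calc dzeta a 1 + zetav (a + 1)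
      = ∑' n : ℕ, (harmonic n : ℝ) / ((n : ℝ) + 1) ^ a + ∑' n : ℕ, 1 / ((n : ℝ) + 1) ^ (a + 1) := by
        -- `H₀ = 0`, so the first sum is `hdzeta` shifted by one
        rw [hsum.tsum_eq_zero_add, hdzeta, zetav_eq_tsum]
        push_cast
        simp only [harmonic_zero, Rat.cast_zero, zero_div, zero_add]
        ring_nf
    _ = ∑' n : ℕ, ((harmonic n : ℝ) / ((n : ℝ) + 1) ^ a + 1 / ((n : ℝ) + 1) ^ (a + 1)) :=
        (hsum.tsum_add (summable_one_div_add_one_pow (by omega))).symm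
    _ = _ := tsum_congr fun n => by
        push_cast [harmonic_succ]
        field_simp
        ring

theorem sum_dzeta_eq_zetav {l : ℕ} (hl : 4 ≤ l) :
    ∑ a ∈ Icc 2 (l - 1), dzeta a (l - a) = zetav l := by
  have hsum_u : Summable (tornheimTerm (l - 2) 1 1) :=
    summable_tornheimTerm (i := 0) (by omega) (by omega) (by omega)
  have hsum_v : Summable (tornheimTerm 0 1 (l - 1)) :=
    summable_tornheimTerm (i := 2) (by omega) (by omega) (by omega)
  have hu : ∑' p, tornheimTerm (l - 2) 1 1 p = dzeta (l - 1) 1 + zetav l := by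
    obtain ⟨a, rfl⟩ : ∃ a, l = a + 1 := ⟨l - 1, by omega⟩
    rw [tsum_tornheimTerm_one_one (by omega), Nat.add_sub_cancel,
      dzeta_add_zetav_eq_tsum_harmonic (by omega), show a + 1 - 2 + 1 = a by omega]
  have hv : ∑' p, tornheimTerm 0 1 (l - 1) p = dzeta (l - 1) 1 := by
    rw [dzeta_eq_tsum_tornheimTerm, ← (Equiv.prodComm ℕ ℕ).tsum_eq]
    exact tsum_congr fun p => tornheimTerm_swap 0 1 (l - 1) p
  calc ∑ a ∈ Icc 2 (l - 1), dzeta a (l - a)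
      = ∑' p, ∑ a ∈ Icc 2 (l - 1), tornheimTerm (l - a) 0 a p := by
        simp_rw [dzeta_eq_tsum_tornheimTerm]
        refine (Summable.tsum_finsetSum fun a ha => ?_).symm
        rw [mem_Icc] at ha
        exact summable_tornheimTerm (i := a - 2) (by omega) (by omega) (by omega)
    _ = (dzeta (l - 1) 1 + zetav l) - dzeta (l - 1) 1 := by
        rw [tsum_congr (sum_Icc_tornheimTerm (by omega)), hsum_u.tsum_sub hsum_v, hu, hv]
    _ = zetav l := by ring

theorem zetav_mul_zetav {a b : ℕ} (ha : 2 ≤ a) (hb : 2 ≤ b) :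
    zetav a * zetav b = dzeta a b + dzeta b a + zetav (a + b) := by
  set f : ℕ+ × ℕ+ → ℝ := fun q => 1 / ((q.1 : ℝ) ^ a * (q.2 : ℝ) ^ b)
  have hzeta : ∀ {c : ℕ}, 2 ≤ c → Summable fun m : ℕ+ => 1 / (m : ℝ) ^ c := fun hc =>
    (Real.summable_one_div_nat_pow.2 hc).comp_injective PNat.coe_injective
  have hprod := (hzeta ha).mul_of_nonneg (hzeta hb) (fun _ => by positivity) fun _ => by positivity
  have hf : Summable f := hprod.congr fun _ => one_div_mul_one_div _ _
  set S := {q : ℕ+ × ℕ+ | q.2 < q.1}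
  set T := {q : ℕ+ × ℕ+ | q.1 < q.2}
  set D := {q : ℕ+ × ℕ+ | q.1 = q.2}
  have hsplit : ∀ q, f q = S.indicator f q + T.indicator f q + D.indicator f q := by
    intro q
    simp only [Set.indicator_apply, S, T, D, Set.mem_ofPred_eq]
    rcases lt_trichotomy q.1 q.2 with h | h | h
    · simp [h, h.ne, h.not_gt]
    · simp [h]
    · simp [h, h.ne', h.not_gt]
  have hS : ∑' q, S.indicator f q = dzeta a b := (_root_.tsum_subtype S f).symm
  have hT : ∑' q, T.indicator f q = dzeta b a := by
    let e : {q : ℕ+ × ℕ+ // q.2 < q.1} ≃ T := (Equiv.prodComm ℕ+ ℕ+).subtypeEquiv fun _ => Iff.rfl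
    rw [← _root_.tsum_subtype, dzeta, ← e.tsum_eq]
    exact tsum_congr fun q => by
      change f q.1.swap = _
      simp [f, mul_comm]
  have hD : ∑' q, D.indicator f q = zetav (a + b) := by
    rw [zetav, ← Function.Injective.tsum_eq (f := D.indicator f) (g := fun m : ℕ+ => (m, m))
      (fun m n h => congrArg Prod.fst h)
      (Set.support_indicator_subset.trans fun q (hq : q.1 = q.2) => ⟨q.1, Prod.ext rfl hq⟩)]
    exact tsum_congr fun m => by simp [D, f, pow_add]
  calc zetav a * zetav b = ∑' q, f q :=
        ((hzeta ha).tsum_mul_tsum (hzeta hb) hprod).trans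
          (tsum_congr fun _ => one_div_mul_one_div _ _)
    _ = ∑' q, (S.indicator f q + T.indicator f q + D.indicator f q) := tsum_congr hsplit
    _ = dzeta a b + dzeta b a + zetav (a + b) := by
        rw [Summable.tsum_add ((hf.indicator S).add (hf.indicator T)) (hf.indicator D),
          Summable.tsum_add (hf.indicator S) (hf.indicator T), hS, hT, hD]

open PowerSeries in
lemma bernoulliPowerSeries_sq :
    bernoulliPowerSeries ℚ ^ 2 =
      (1 - X) * bernoulliPowerSeries ℚ - X * d⁄dX ℚ (bernoulliPowerSeries ℚ) := by
  set B := bernoulliPowerSeries ℚ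
  set E : ℚ⟦X⟧ := exp ℚ - 1
  have hB : B * E = X := bernoulliPowerSeries_mul_exp_sub_one ℚ
  have hE : E ≠ 0 := fun h => by simpa [E] using congrArg (coeff 1) h
  have hdE : d⁄dX ℚ E = E + 1 := by simp [E, derivative_exp]
  have hdB : B * d⁄dX ℚ E + E * d⁄dX ℚ B = 1 := by
    simpa [Derivation.leibniz] using congrArg (d⁄dX ℚ) hB
  -- after multiplying by `E²`, both sides reduce to `X²` by `B E = X` and its derivative
  apply mul_right_cancel₀ (pow_ne_zero 2 hE)
  linear_combination (B * E - E) * hB + X * E * hdB - X * E * B * hdE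

open PowerSeries in
lemma sum_range_choose_mul_bernoulli_mul_bernoulli (n : ℕ) :
    ∑ k ∈ range (n + 1), (n.choose k : ℚ) * bernoulli k * bernoulli (n - k) =
      (1 - n) * bernoulli n - n * bernoulli (n - 1) := by
  obtain _ | m := n
  · simp
  have h := congrArg (coeff (m + 1)) bernoulliPowerSeries_sq
  rw [sq, coeff_mul, Nat.sum_antidiagonal_eq_sum_range_succ_mk, map_sub, sub_mul, one_mul, map_sub,
    coeff_succ_X_mul, coeff_succ_X_mul, coeff_derivative] at h
  simp only [bernoulliPowerSeries, coeff_mk, Algebra.algebraMap_self, RingHom.id_apply] at h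
  have hterm : ∀ k ∈ range (m + 1 + 1),
      ((m + 1).choose k : ℚ) * bernoulli k * bernoulli (m + 1 - k) =
        (m + 1)! * (bernoulli k / k ! * (bernoulli (m + 1 - k) / (m + 1 - k)!)) := by
    intro k hk
    rw [Nat.cast_choose ℚ (Nat.lt_succ_iff.1 (mem_range.1 hk))]
    field_simp
  rw [sum_congr rfl hterm, ← mul_sum, h, Nat.add_sub_cancel]
  push_cast [Nat.factorial_succ]
  field_simp
  ring

lemma sum_range_two_mul_add_one {M : Type*} [AddCommMonoid M] (f : ℕ → M) (N : ℕ) :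
    ∑ k ∈ range (2 * N + 1), f k =
      ∑ j ∈ range (N + 1), f (2 * j) + ∑ j ∈ range N, f (2 * j + 1) := by
  induction N with
  | zero => simp
  | succ N ih =>
    rw [show 2 * (N + 1) + 1 = 2 * N + 1 + 1 + 1 by ring, sum_range_succ, sum_range_succ, ih,
      sum_range_succ (fun j => f (2 * j)) (N + 1), sum_range_succ (fun j => f (2 * j + 1)) N,
      Nat.mul_add_one 2 N]
    abel

lemma sum_Ico_choose_mul_bernoulli_mul_bernoulli_two_mul {N : ℕ} (hN : 2 ≤ N) :
    ∑ j ∈ Ico 1 N, ((2 * N).choose (2 * j) : ℚ) * bernoulli (2 * j) * bernoulli (2 * (N - j)) =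
      -(2 * N + 1) * bernoulli (2 * N) := by
  -- odd `k` contribute nothing: `B_k = 0` for odd `k > 1`, and the `k = 1` term has `B_{2N-1} = 0`
  have hodd : ∀ j ∈ range N, ((2 * N).choose (2 * j + 1) : ℚ) * bernoulli (2 * j + 1) *
      bernoulli (2 * N - (2 * j + 1)) = 0 := by
    intro j _
    rcases Nat.eq_zero_or_pos j with rfl | hj0
    · rw [bernoulli_eq_zero_of_odd (n := 2 * N - (2 * 0 + 1)) ⟨N - 1, by omega⟩ (by omega),
        mul_zero]
    · rw [bernoulli_eq_zero_of_odd ⟨j, rfl⟩ (by omega), mul_zero, zero_mul]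
  have h := sum_range_choose_mul_bernoulli_mul_bernoulli (2 * N)
  rw [sum_range_two_mul_add_one, sum_eq_zero hodd, add_zero,
    bernoulli_eq_zero_of_odd (n := 2 * N - 1) ⟨N - 1, by omega⟩ (by omega), range_eq_Ico,
    sum_Ico_succ_top (Nat.zero_le N), sum_eq_sum_Ico_succ_bot (by omega)] at h
  rw [sum_congr rfl fun j _ => by rw [show 2 * (N - j) = 2 * N - 2 * j by omega]]
  simp only [mul_zero, Nat.choose_zero_right, Nat.cast_one, bernoulli_zero, mul_one, tsub_zero,
    one_mul, zero_add, Nat.choose_self, tsub_self, Nat.cast_mul, Nat.cast_ofNat] at h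
  linear_combination h

lemma zetav_two_mul {k : ℕ} (hk : k ≠ 0) :
    zetav (2 * k) = (-1) ^ (k + 1) * (2 * π) ^ (2 * k) * bernoulli (2 * k) / (2 * (2 * k)!) := by
  have h := (hasSum_nat_add_iff' 1).2 (hasSum_zeta_nat hk)
  rw [sum_range_one, Nat.cast_zero, zero_pow (by omega), div_zero, sub_zero] at h
  push_cast at h
  have h2 : (2 : ℝ) ^ (2 * k - 1) * 2 = 2 ^ (2 * k) := by
    rw [← pow_succ, Nat.sub_add_cancel (by omega)]
  rw [zetav_eq_tsum, h.tsum_eq, mul_pow, ← h2]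
  field_simp

lemma sum_Ico_zetav_mul_zetav_two_mul {N : ℕ} (hN : 2 ≤ N) :
    ∑ j ∈ Ico 1 N, zetav (2 * j) * zetav (2 * (N - j)) = (2 * N + 1) / 2 * zetav (2 * N) := by
  have hterm : ∀ j ∈ Ico 1 N, zetav (2 * j) * zetav (2 * (N - j)) =
      (-1) ^ N * (2 * π) ^ (2 * N) / (4 * (2 * N)!) *
        (((2 * N).choose (2 * j) * bernoulli (2 * j) * bernoulli (2 * (N - j)) : ℚ) : ℝ) := by
    intro j hj
    rw [mem_Ico] at hj
    obtain ⟨m, rfl⟩ : ∃ m, N = j + m := ⟨N - j, by omega⟩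
    rw [zetav_two_mul (by omega), zetav_two_mul (by omega), Nat.add_sub_cancel_left,
      Nat.cast_choose ℚ (by omega), show 2 * (j + m) - 2 * j = 2 * m by omega]
    push_cast
    field_simp
    ring
  rw [sum_congr rfl hterm, ← mul_sum, ← Rat.cast_sum,
    sum_Ico_choose_mul_bernoulli_mul_bernoulli_two_mul hN, zetav_two_mul (by omega)]
  push_cast
  field_simp
  ring

lemma sum_Ico_dzeta_two_mul {N : ℕ} (hN : 2 ≤ N) :
    ∑ j ∈ Ico 1 N, dzeta (2 * j) (2 * (N - j)) = 3 / 4 * zetav (2 * N) := by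
  have hstuffle : ∀ j ∈ Ico 1 N, zetav (2 * j) * zetav (2 * (N - j)) =
      dzeta (2 * j) (2 * (N - j)) + dzeta (2 * (N - j)) (2 * j) + zetav (2 * N) := by
    intro j hj
    rw [mem_Ico] at hj
    rw [zetav_mul_zetav (by omega) (by omega), show 2 * j + 2 * (N - j) = 2 * N by omega]
  have hreflect : ∑ j ∈ Ico 1 N, dzeta (2 * (N - j)) (2 * j) =
      ∑ j ∈ Ico 1 N, dzeta (2 * j) (2 * (N - j)) := by
    have h := sum_Ico_reflect (fun j => dzeta (2 * j) (2 * (N - j))) 1 (Nat.le_succ N)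
    rw [show N + 1 - N = 1 by omega, Nat.add_sub_cancel] at h
    rw [← h]
    refine sum_congr rfl fun j hj => ?_
    rw [mem_Ico] at hj
    rw [show N - (N - j) = j by omega]
  have h := sum_Ico_zetav_mul_zetav_two_mul hN
  rw [sum_congr rfl hstuffle, sum_add_distrib, sum_add_distrib, hreflect, sum_const, Nat.card_Ico,
    nsmul_eq_mul, Nat.cast_sub (by omega)] at h
  push_cast at h
  linarith

theorem stmt2 (l : ℕ) (hl : 4 ≤ l) (hev : l % 2 = 0) :
    ∑ l₁ ∈ (Finset.Icc 2 (l - 1)).filter (fun l₁ => l₁ % 2 = 1 ∧ (l - l₁) % 2 = 1),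
      dzeta l₁ (l - l₁) = (1 / 4) * zetav l := by
  obtain ⟨N, rfl⟩ : ∃ N, l = 2 * N := ⟨l / 2, by omega⟩
  have heven : (Icc 2 (2 * N - 1)).filter (fun a => ¬(a % 2 = 1 ∧ (2 * N - a) % 2 = 1)) =
      (Ico 1 N).image (2 * ·) := by
    ext a
    simp only [mem_filter, mem_Icc, mem_image, mem_Ico]
    constructor
    · rintro ⟨ha, hodd⟩
      exact ⟨a / 2, by omega, by omega⟩
    · rintro ⟨j, hj, rfl⟩
      omega
  have hsplit := sum_filter_add_sum_filter_not (Icc 2 (2 * N - 1))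
    (fun a => a % 2 = 1 ∧ (2 * N - a) % 2 = 1) fun a => dzeta a (2 * N - a)
  rw [sum_dzeta_eq_zetav hl, heven, sum_image fun x _ y _ h => by simpa using h] at hsplit
  have heven_sum := sum_Ico_dzeta_two_mul (show 2 ≤ N by omega)
  simp only [Nat.mul_sub] at heven_sum
  linarith
end

section
/- For every even integer l ≥ 4, T_l(−1, 1) = −ζ(l)/2, where T_l(x,y) = ∑_{l₁ ≥ 2, l₂ ≥ 1, l₁+l₂=l} x^{l₁−1} y^{l₂−1} ζ(l₁, l₂); equivalently, the alternating sum ∑ (−1)^{l₁−1} ζ(l₁, l₂) over such pairs equals −ζ(l)/2. -/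
/-!
For `m > n > 0` and even `l`, the alternating sum `∑ (-1)^(a-1) / (m^a n^(l-a))` over
`2 ≤ a ≤ l - 1` telescopes to `1/((m+n) m^(l-1)) - 1/((m+n) m n^(l-2))`.
Summing the first term over `n < m` gives `m^(1-l) ∑_{k=1}^{m-1} 1/(m+k)`. In the second put
`m = n + p`: the partial fractions `1/((2n+p)(n+p)) = (1/(n+p) - 1/(2n+p))/n` telescope in `p` to
`n^(1-l) ∑_{k=1}^{n} 1/(n+k)`. The two inner sums differ only by the term `1/(2n)`, which leaves
`-ζ(l)/2`.
-/

open scoped BigOperators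
open Finset

open Filter Topology

theorem sum_range_neg_one_pow_div_eq {K : Type*} [Field K] {x y : K} (hx : x ≠ 0) (hy : y ≠ 0)
    (hxy : x + y ≠ 0) (k : ℕ) :
    ∑ i ∈ range k, (-1) ^ (i + 1) / (x ^ (i + 2) * y ^ (k - i))
      = (-1) ^ k / ((x + y) * x ^ (k + 1)) - 1 / ((x + y) * x * y ^ k) := by
  set u : ℕ → K := fun i => (-1) ^ i / ((x + y) * x ^ (i + 1) * y ^ (k - i))
  have hstep : ∀ i ∈ range k, (-1) ^ (i + 1) / (x ^ (i + 2) * y ^ (k - i)) = u (i + 1) - u i := by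
    intro i hi
    obtain ⟨j, rfl⟩ := Nat.exists_eq_add_of_lt (mem_range.mp hi)
    simp only [u, show i + j + 1 - i = j + 1 by omega, show i + j + 1 - (i + 1) = j by omega]
    field_simp
    ring
  rw [sum_congr rfl hstep, sum_range_sub]
  simp [u]

theorem hasSum_sub_succ_of_antitone {g : ℕ → ℝ} (hg : Antitone g) (h0 : Tendsto g atTop (𝓝 0)) :
    HasSum (fun p => g p - g (p + 1)) (g 0) := by
  rw [hasSum_iff_tendsto_nat_of_nonneg (fun p => sub_nonneg.2 (hg p.le_succ))]
  simp only [sum_range_sub']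
  simpa using (tendsto_const_nhds (x := g 0)).sub h0

theorem hasSum_sub_add_of_antitone {g : ℕ → ℝ} (hg : Antitone g) (h0 : Tendsto g atTop (𝓝 0))
    (k : ℕ) : HasSum (fun p => g p - g (p + k)) (∑ i ∈ range k, g i) := by
  induction k with
  | zero => simp
  | succ k ih =>
    have hstep := hasSum_sub_succ_of_antitone (g := fun p => g (p + k))
      (fun a b h => hg (by omega)) (h0.comp (tendsto_add_atTop_nat k))
    rw [sum_range_succ]
    convert ih.add hstep using 1
    · funext p
      rw [show p + 1 + k = p + (k + 1) by omega]
      ring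
    · rw [zero_add]

theorem sum_Icc_neg_one_pow_div_eq {K : Type*} [Field K] {x y : K} (hx : x ≠ 0) (hy : y ≠ 0)
    (hxy : x + y ≠ 0) {l : ℕ} (hl : 2 ≤ l) (hev : Even l) :
    ∑ a ∈ Icc 2 (l - 1), (-1) ^ (a - 1) * (1 / (x ^ a * y ^ (l - a)))
      = 1 / ((x + y) * x ^ (l - 1)) - 1 / ((x + y) * x * y ^ (l - 2)) := by
  obtain ⟨k, rfl⟩ := Nat.exists_eq_add_of_le' hl
  have hk : Even k := by simpa [Nat.even_add] using hev
  rw [show Icc 2 (k + 2 - 1) = Ico 2 (k + 2) by ext; simp only [mem_Icc, mem_Ico]; omega,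
    sum_Ico_eq_sum_range]
  simp only [Nat.add_sub_cancel, show k + 2 - 1 = k + 1 by omega]
  convert sum_range_neg_one_pow_div_eq hx hy hxy k using 1
  · refine sum_congr rfl fun i _ => ?_
    rw [show 2 + i - 1 = i + 1 by omega, show k + 2 - (2 + i) = k - i by omega, add_comm 2 i]
    ring
  · rw [hk.neg_one_pow]

theorem hasSum_one_div_add_sub_one_div_two_mul_add (n : ℕ) :
    HasSum (fun p : ℕ => 1 / ((n : ℝ) + (p + 1)) - 1 / (2 * n + (p + 1)))
      (∑ k ∈ Ico 1 (n + 1), 1 / ((n : ℝ) + k)) := by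
  have hg : Antitone fun p : ℕ => 1 / ((n : ℝ) + (p + 1)) := fun a b hab => by
    dsimp only
    gcongr
  have h0 : Tendsto (fun p : ℕ => 1 / ((n : ℝ) + (p + 1))) atTop (𝓝 0) := by
    simp_rw [one_div, ← add_assoc]
    exact tendsto_inv_atTop_zero.comp <| tendsto_atTop_add_const_right _ _ <|
      tendsto_atTop_add_const_left _ _ tendsto_natCast_atTop_atTop
  convert hasSum_sub_add_of_antitone hg h0 n using 1
  · funext p
    push_cast
    ring_nf
  · rw [sum_Ico_eq_sum_range, Nat.add_sub_cancel]
    refine sum_congr rfl fun k _ => ?_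
    push_cast
    ring_nf

-- `H_{2m-1} - H_m` in terms of harmonic numbers.
noncomputable def harmonicTail (m : ℕ) : ℝ := ∑ k ∈ Ico 1 m, 1 / ((m : ℝ) + k)

theorem sum_Ico_one_succ_eq_harmonicTail_add {m : ℕ} (hm : 1 ≤ m) :
    ∑ k ∈ Ico 1 (m + 1), 1 / ((m : ℝ) + k) = harmonicTail m + 1 / (2 * m) := by
  rw [sum_Ico_succ_top hm, harmonicTail, two_mul]

def PNat.ltEquivIco (m : ℕ+) : {n : ℕ+ // n < m} ≃ Ico 1 (m : ℕ) where
  toFun n := ⟨n, mem_Ico.2 ⟨n.1.pos, n.2⟩⟩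
  invFun k := ⟨⟨k, (mem_Ico.1 k.2).1⟩, (mem_Ico.1 k.2).2⟩
  left_inv _ := rfl
  right_inv _ := rfl

theorem hasSum_pnat_lt {M : Type*} [AddCommMonoid M] [TopologicalSpace M] (m : ℕ+)
    (g : ℕ → M) : HasSum (fun n : {n : ℕ+ // n < m} => g n) (∑ k ∈ Ico 1 (m : ℕ), g k) :=
  (PNat.ltEquivIco m).hasSum_iff.2 (Finset.hasSum _ g)

theorem sq_mul_sq_le_pow_mul_pow {R : Type*} [CommSemiring R] [PartialOrder R] [IsOrderedRing R]
    {m n : R} (hn : 1 ≤ n) (hnm : n ≤ m) {a b : ℕ} (ha : 2 ≤ a) (hab : 4 ≤ a + b) :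
    m ^ 2 * n ^ 2 ≤ m ^ a * n ^ b := by
  have hn0 : 0 ≤ n := zero_le_one.trans hn
  have hm0 : 0 ≤ m := hn0.trans hnm
  calc m ^ 2 * n ^ 2 ≤ m ^ 2 * n ^ (a - 2 + b) := by gcongr; omega
    _ = m ^ 2 * n ^ (a - 2) * n ^ b := by rw [pow_add, mul_assoc]
    _ ≤ m ^ 2 * m ^ (a - 2) * n ^ b := by gcongr
    _ = m ^ a * n ^ b := by rw [← pow_add, Nat.add_sub_cancel' ha]

abbrev DZetaIndex := {q : ℕ+ × ℕ+ // q.2 < q.1}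

namespace DZetaIndex

theorem one_le_snd (q : DZetaIndex) : (1 : ℝ) ≤ q.1.2 := by
  exact_mod_cast q.1.2.pos

theorem snd_le_fst (q : DZetaIndex) : (q.1.2 : ℝ) ≤ q.1.1 := by
  exact_mod_cast q.2.le

def addEquiv : ℕ+ × ℕ+ ≃ DZetaIndex where
  toFun x := ⟨(x.1 + x.2, x.1), PNat.lt_add_right x.1 x.2⟩
  invFun q := (q.1.2, q.1.1 - q.1.2)
  left_inv x := Prod.ext rfl (PNat.eq (by simp [PNat.sub_coe, PNat.lt_add_right]))
  right_inv q := Subtype.ext (Prod.ext (PNat.add_sub_of_lt q.2) rfl)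

theorem summable_one_div_sq_mul_sq :
    Summable fun q : DZetaIndex => 1 / ((q.1.1 : ℝ) ^ 2 * (q.1.2 : ℝ) ^ 2) := by
  have h : Summable fun n : ℕ+ => 1 / (n : ℝ) ^ 2 :=
    summable_pnat_iff_summable_nat.2 (Real.summable_one_div_nat_pow.2 one_lt_two)
  exact ((h.mul_of_nonneg h (fun _ => by positivity) fun _ => by positivity).subtype _).congr
    fun q => one_div_mul_one_div _ _

theorem summable_one_div_pow_mul_pow {a b : ℕ} (ha : 2 ≤ a) (hab : 4 ≤ a + b) :
    Summable fun q : DZetaIndex => 1 / ((q.1.1 : ℝ) ^ a * (q.1.2 : ℝ) ^ b) :=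
  summable_one_div_sq_mul_sq.of_nonneg_of_le (fun _ => by positivity) fun q =>
    one_div_le_one_div_of_le (by positivity)
      (sq_mul_sq_le_pow_mul_pow q.one_le_snd q.snd_le_fst ha hab)

theorem summable_one_div_add_mul_pow {l : ℕ} (hl : 4 ≤ l) :
    Summable fun q : DZetaIndex => 1 / ((q.1.1 + q.1.2 : ℝ) * (q.1.1 : ℝ) ^ (l - 1)) :=
  (summable_one_div_pow_mul_pow (a := l - 1) (b := 1) (by omega) (by omega)).of_nonneg_of_le
    (fun _ => by positivity) fun q => one_div_le_one_div_of_le (by positivity) <| by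
      rw [pow_one, mul_comm]
      gcongr
      linarith [q.one_le_snd]

theorem summable_one_div_add_mul_mul_pow {l : ℕ} (hl : 4 ≤ l) :
    Summable fun q : DZetaIndex => 1 / ((q.1.1 + q.1.2 : ℝ) * q.1.1 * (q.1.2 : ℝ) ^ (l - 2)) :=
  (summable_one_div_pow_mul_pow (a := 2) (b := l - 2) le_rfl (by omega)).of_nonneg_of_le
    (fun _ => by positivity) fun q => one_div_le_one_div_of_le (by positivity) <| by
      rw [sq]
      gcongr
      linarith [q.one_le_snd]

end DZetaIndex

open DZetaIndex

theorem hasSum_one_div_add_mul_pow {l : ℕ} (hl : 4 ≤ l) :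
    HasSum (fun m : ℕ+ => 1 / (m : ℝ) ^ (l - 1) * harmonicTail m)
      (∑' q : DZetaIndex, 1 / ((q.1.1 + q.1.2 : ℝ) * (q.1.1 : ℝ) ^ (l - 1))) := by
  refine ((Equiv.subtypeProdEquivSigmaSubtype fun m n : ℕ+ => n < m).symm.hasSum_iff.2
    (summable_one_div_add_mul_pow hl).hasSum).sigma fun m => ?_
  have hval : 1 / (m : ℝ) ^ (l - 1) * harmonicTail m
      = ∑ k ∈ Ico 1 (m : ℕ), 1 / ((m + k : ℝ) * (m : ℝ) ^ (l - 1)) := by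
    rw [harmonicTail, mul_sum]
    exact sum_congr rfl fun k _ => by rw [one_div_mul_one_div, mul_comm]
  rw [hval]
  exact hasSum_pnat_lt m _

theorem hasSum_one_div_add_mul_mul_pow {l : ℕ} (hl : 4 ≤ l) :
    HasSum (fun n : ℕ+ => 1 / (n : ℝ) ^ (l - 1) * harmonicTail n + 1 / 2 * (1 / (n : ℝ) ^ l))
      (∑' q : DZetaIndex, 1 / ((q.1.1 + q.1.2 : ℝ) * q.1.1 * (q.1.2 : ℝ) ^ (l - 2))) := by
  refine (addEquiv.hasSum_iff.2 (summable_one_div_add_mul_mul_pow hl).hasSum).prod_fiberwise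
    fun n => ?_
  simp only [Function.comp_apply, addEquiv, Equiv.coe_fn_mk, PNat.add_coe, Nat.cast_add]
  rw [hasSum_pnat_iff_hasSum_succ
    (f := fun k : ℕ => 1 / (((n : ℝ) + k + n) * (n + k) * (n : ℝ) ^ (l - 2)))]
  have hval : 1 / (n : ℝ) ^ (l - 1) * harmonicTail n + 1 / 2 * (1 / (n : ℝ) ^ l)
      = 1 / (n : ℝ) ^ (l - 1) * ∑ k ∈ Ico 1 ((n : ℕ) + 1), 1 / ((n : ℝ) + k) := by
    rw [sum_Ico_one_succ_eq_harmonicTail_add n.pos, ← Nat.sub_add_cancel (by omega : 1 ≤ l),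
      pow_succ, Nat.add_sub_cancel]
    field_simp
  rw [hval]
  refine ((hasSum_one_div_add_sub_one_div_two_mul_add n).mul_left _).congr_fun fun p => ?_
  rw [show l - 1 = l - 2 + 1 by omega, pow_succ]
  push_cast
  field_simp
  ring

theorem sum_neg_one_pow_mul_dzeta {l : ℕ} (hl : 4 ≤ l) (hev : Even l) :
    ∑ a ∈ Icc 2 (l - 1), (-1 : ℝ) ^ (a - 1) * dzeta a (l - a) = -zetav l / 2 := by
  have hζ : HasSum (fun n : ℕ+ => 1 / (n : ℝ) ^ l) (zetav l) :=
    (summable_pnat_iff_summable_nat.2 (Real.summable_one_div_nat_pow.2 (by omega))).hasSum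
  have hsum := (hasSum_one_div_add_mul_pow hl).add (hζ.mul_left (1 / 2))
  calc ∑ a ∈ Icc 2 (l - 1), (-1 : ℝ) ^ (a - 1) * dzeta a (l - a)
      = ∑' q : DZetaIndex, ∑ a ∈ Icc 2 (l - 1),
          (-1 : ℝ) ^ (a - 1) * (1 / ((q.1.1 : ℝ) ^ a * (q.1.2 : ℝ) ^ (l - a))) := by
        rw [Summable.tsum_finsetSum fun a ha =>
          (summable_one_div_pow_mul_pow (mem_Icc.1 ha).1 (by omega)).mul_left _]
        simp_rw [tsum_mul_left]
        rfl
    _ = ∑' q : DZetaIndex, (1 / ((q.1.1 + q.1.2 : ℝ) * (q.1.1 : ℝ) ^ (l - 1))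
          - 1 / ((q.1.1 + q.1.2 : ℝ) * q.1.1 * (q.1.2 : ℝ) ^ (l - 2))) :=
        tsum_congr fun q => sum_Icc_neg_one_pow_div_eq (by positivity) (by positivity)
          (by positivity) (by omega) hev
    _ = -zetav l / 2 := by
        rw [(summable_one_div_add_mul_pow hl).tsum_sub (summable_one_div_add_mul_mul_pow hl),
          (hasSum_one_div_add_mul_mul_pow hl).unique hsum]
        ring

theorem stmt13 (l : ℕ) (hl : 4 ≤ l) (hev : l % 2 = 0) :
    Tl l (-1) 1 = -(zetav l : ℂ) / 2 ∧
    ∑ l₁ ∈ Finset.Icc 2 (l - 1), (-1 : ℝ) ^ (l₁ - 1) * dzeta l₁ (l - l₁)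
      = -(zetav l) / 2 := by
  have hreal := sum_neg_one_pow_mul_dzeta hl (Nat.even_iff.2 hev)
  refine ⟨?_, hreal⟩
  have hcast := congrArg (fun r : ℝ => (r : ℂ)) hreal
  push_cast at hcast
  simpa [Tl] using hcast
end
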